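/- With margin vectors a ∈ ℕ^m, b ∈ ℕ^n satisfying Σ a_i = Σ b_j, the number of 3-way contingency tables equals the dimension of the corresponding weight space of semi-invariants of the p-complete bipartite quiver: T_{a,b} = dim_ℂ SI(Q^p_{m,n}, 𝟏)_{θ_{a,b}}. -/

import Mathlib

/-- A finite quiver: finite sets of vertices and arrows with tail and head maps. -/
structure FinQuiver where
  V : Type
  A : Type
  [instFinV : Fintype V]
  [instDecV : DecidableEq V]
  [instFinA : Fintype A]
  [instDecA : DecidableEq A]
  t : A → V
  h : A → V

attribute [instance] FinQuiver.instFinV FinQuiver.instDecV FinQuiver.instFinA FinQuiver.instDecA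

/-- Coerce an `ℕ`-valued function (dimension vector) to a `ℤ`-valued one. -/
def natToInt {X : Type} (α : X → ℕ) : X → ℤ := fun x => (α x : ℤ)

namespace FinQuiver

variable (Q : FinQuiver)

/-- `Q` has an oriented cycle. -/
def HasCycle : Prop :=
  ∃ k : ℕ, ∃ c : Fin (k + 1) → Q.A, ∀ i : Fin (k + 1), Q.h (c i) = Q.t (c (i + 1))

/-- `Q` is acyclic: it has no oriented cycles. -/
def Acyclic : Prop := ¬ Q.HasCycle

/-- Two vertices are adjacent if some arrow joins them (in either direction). -/
def Adj (u v : Q.V) : Prop :=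
  ∃ a : Q.A, (Q.t a = u ∧ Q.h a = v) ∨ (Q.t a = v ∧ Q.h a = u)

/-- `Q` is connected as an undirected graph. -/
def Connected : Prop := ∀ u v : Q.V, Relation.ReflTransGen Q.Adj u v

/-- The representation space `rep(Q, β)`. -/
def Rep (β : Q.V → ℕ) : Type :=
  ∀ a : Q.A, Matrix (Fin (β (Q.h a))) (Fin (β (Q.t a))) ℂ

/-- The group `GL(β) = ∏ₓ GL(β(x), ℂ)`. -/
def GLb (β : Q.V → ℕ) : Type :=
  ∀ x : Q.V, (Matrix (Fin (β x)) (Fin (β x)) ℂ)ˣ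

/-- The action of `g⁻¹ ∈ GL(β)` on `W ∈ rep(Q,β)`: `(g⁻¹ · W)ₐ = g_{ha}⁻¹ Wₐ g_{ta}`. -/
noncomputable def invAct {β : Q.V → ℕ} (g : Q.GLb β) (W : Q.Rep β) : Q.Rep β :=
  fun a => ((g (Q.h a))⁻¹).val * W a * (g (Q.t a)).val

/-- `f : rep(Q,β) → ℂ` is a polynomial function of the matrix entries. -/
def IsPolyFun {β : Q.V → ℕ} (f : Q.Rep β → ℂ) : Prop :=
  ∃ P : MvPolynomial ((a : Q.A) × (Fin (β (Q.h a)) × Fin (β (Q.t a)))) ℂ,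
    ∀ W : Q.Rep β, f W = MvPolynomial.eval (fun i => W i.1 i.2.1 i.2.2) P

/-- The character `∏ₓ det(gₓ)^{σ(x)}` of `GL(β)` attached to an integral weight `σ`. -/
noncomputable def detWeight {β : Q.V → ℕ} (σ : Q.V → ℤ) (g : Q.GLb β) : ℂ :=
  ∏ x : Q.V, (Matrix.det (g x).val) ^ (σ x)

/-- The space `SI(Q,β)_σ` of semi-invariants of weight `σ`: polynomial functions `f` on
`rep(Q,β)` with `f(g⁻¹ · W) = (∏ₓ det(gₓ)^{σ(x)}) f(W)` for all `g ∈ GL(β)`. -/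
noncomputable def SIw (β : Q.V → ℕ) (σ : Q.V → ℤ) : Submodule ℂ (Q.Rep β → ℂ) where
  carrier := {f | Q.IsPolyFun f ∧
    ∀ (g : Q.GLb β) (W : Q.Rep β), f (Q.invAct g W) = Q.detWeight σ g * f W}
  add_mem' := by
    rintro f₁ f₂ ⟨⟨P₁, hP₁⟩, h₁⟩ ⟨⟨P₂, hP₂⟩, h₂⟩
    refine ⟨⟨P₁ + P₂, fun W => ?_⟩, fun g W => ?_⟩
    · simp [Pi.add_apply, hP₁ W, hP₂ W]
    · simp only [Pi.add_apply, h₁ g W, h₂ g W]; ring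
  zero_mem' := by
    refine ⟨⟨0, fun W => ?_⟩, fun g W => ?_⟩ <;> simp
  smul_mem' := by
    rintro c f ⟨⟨P, hP⟩, hf⟩
    refine ⟨⟨MvPolynomial.C c * P, fun W => ?_⟩, fun g W => ?_⟩
    · simp [Pi.smul_apply, hP W, smul_eq_mul]
    · simp only [Pi.smul_apply, hf g W, smul_eq_mul]; ring

/-- The dimension of the weight space of semi-invariants `SI(Q,β)_σ`. -/
noncomputable def siDim (β : Q.V → ℕ) (σ : Q.V → ℤ) : ℕ :=
  Module.finrank ℂ (Q.SIw β σ)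

/-- The Euler (Ringel) form of `Q`. -/
def euler (α γ : Q.V → ℤ) : ℤ :=
  (∑ x : Q.V, α x * γ x) - ∑ a : Q.A, α (Q.t a) * γ (Q.h a)

/-- The weight `⟨α, ·⟩ : x ↦ ⟨α, eₓ⟩` attached to a dimension vector `α`. -/
def weightOf (α : Q.V → ℕ) : Q.V → ℤ :=
  fun x => (α x : ℤ) - ∑ a : Q.A, (if Q.h a = x then (α (Q.t a) : ℤ) else 0)

/-- `(α ∘ β)_Q := dim SI(Q,β)_{⟨α,·⟩}`. -/
noncomputable def circ (α β : Q.V → ℕ) : ℕ := Q.siDim β (Q.weightOf α)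

/-- `φ` is a morphism of representations `V → W`. -/
def IsHom {α γ : Q.V → ℕ} (V : Q.Rep α) (W : Q.Rep γ)
    (φ : ∀ x : Q.V, Matrix (Fin (γ x)) (Fin (α x)) ℂ) : Prop :=
  ∀ a : Q.A, φ (Q.h a) * V a = W a * φ (Q.t a)

/-- The space `Hom_Q(V, W)` of morphisms of representations. -/
noncomputable def homSpace {α γ : Q.V → ℕ} (V : Q.Rep α) (W : Q.Rep γ) :
    Submodule ℂ (∀ x : Q.V, Matrix (Fin (γ x)) (Fin (α x)) ℂ) where
  carrier := {φ | Q.IsHom V W φ}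
  add_mem' := by
    intro φ ψ hφ hψ a
    simp only [Pi.add_apply, Matrix.add_mul, Matrix.mul_add, hφ a, hψ a]
  zero_mem' := by
    intro a
    simp
  smul_mem' := by
    intro c φ hφ a
    simp only [Pi.smul_apply, Matrix.smul_mul, Matrix.mul_smul, hφ a]

/-- A representation is Schur if its endomorphism algebra is one-dimensional. -/
def IsSchur {α : Q.V → ℕ} (V : Q.Rep α) : Prop :=
  Module.finrank ℂ (Q.homSpace V V) = 1

/-- A quiver exceptional sequence of dimension vectors. -/
def IsExcSeq {Nn : ℕ} (ε : Fin Nn → (Q.V → ℕ)) : Prop :=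
  (∀ i, Q.euler (natToInt (ε i)) (natToInt (ε i)) = 1 ∧ ∃ V : Q.Rep (ε i), Q.IsSchur V) ∧
  ∀ i j : Fin Nn, i < j →
    Q.euler (natToInt (ε i)) (natToInt (ε j)) ≤ 0 ∧ Q.circ (ε j) (ε i) ≠ 0

/-- The quiver `Q(ℰ)` attached to a sequence `ℰ = (ε₁,…,ε_N)` of dimension vectors:
vertices `1,…,N` and `−⟨εᵢ, εⱼ⟩` arrows from `i` to `j` for `i ≠ j`. -/
def quiverOfSeq {Nn : ℕ} (ε : Fin Nn → (Q.V → ℕ)) : FinQuiver where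
  V := Fin Nn
  A := (i : Fin Nn) × (j : Fin Nn) ×
        Fin (if i = j then 0 else (-(Q.euler (natToInt (ε i)) (natToInt (ε j)))).toNat)
  t := fun a => a.1
  h := fun a => a.2.1

end FinQuiver

/-- An isomorphism of quivers. -/
structure QuiverIso (Q₁ Q₂ : FinQuiver) where
  vEquiv : Q₁.V ≃ Q₂.V
  aEquiv : Q₁.A ≃ Q₂.A
  t_comm : ∀ a : Q₁.A, Q₂.t (aEquiv a) = vEquiv (Q₁.t a)
  h_comm : ∀ a : Q₁.A, Q₂.h (aEquiv a) = vEquiv (Q₁.h a)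

/-- The `p`-complete bipartite quiver `Q^p_{m,n}`: sources `x₁,…,x_m`, sinks `y₁,…,y_n`,
and `p` arrows from each `xᵢ` to each `yⱼ`. -/
def Qpmn (m n p : ℕ) : FinQuiver where
  V := Fin m ⊕ Fin n
  A := Fin m × Fin n × Fin p
  t := fun a => Sum.inl a.1
  h := fun a => Sum.inr a.2.1

/-- The number `T_{a,b}` of 3-way contingency tables of size `m × n × p` with the two
plane-sum margins fixed by `a` and `b`. -/
noncomputable def numTables (m n p : ℕ) (a : Fin m → ℕ) (b : Fin n → ℕ) : ℕ :=
  Nat.card {x : Fin m × Fin n × Fin p → ℕ //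
    (∀ i : Fin m, ∑ j : Fin n, ∑ k : Fin p, x (i, j, k) = a i) ∧
    (∀ j : Fin n, ∑ i : Fin m, ∑ k : Fin p, x (i, j, k) = b j)}

/-- The weight `θ_{a,b}` of `Q^p_{m,n}`. -/
def thetaAB {m n : ℕ} (a : Fin m → ℕ) (b : Fin n → ℕ) : Fin m ⊕ Fin n → ℤ :=
  Sum.elim (fun i => (a i : ℤ)) (fun j => -(b j : ℤ))

/-!
For the dimension vector `𝟏`, `rep(Q, 𝟏) = ℂ^{Q₁}` and `GL(𝟏)` is the torus `(ℂˣ)^{Q₀}`, which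
scales the coordinate of an arrow `a` by `g_{ta} / g_{ha}`. So a monomial with exponent vector
`d : Q₁ → ℕ` transforms by the character of `Σₐ dₐ (e_{ta} − e_{ha}) ∈ ℤ^{Q₀}`, and since these
characters separate points, a polynomial is a semi-invariant of weight `σ` exactly when it is
weighted homogeneous of degree `σ` for the arrow weights `e_{ta} − e_{ha}`. Such polynomials have
the monomials of weight `σ` as a basis. For `Q^p_{m,n}` and `σ = θ_{a,b}`, the weight condition on
`d` says precisely that `d` is a contingency table with margins `a` and `b`.
-/

open MvPolynomial

namespace MvPolynomial

variable {σ R M : Type*}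

theorem coeff_aeval_C_mul_X [CommSemiring R] (s : σ → R) (P : MvPolynomial σ R)
    (d : σ →₀ ℕ) :
    coeff d (aeval (fun i => C (s i) * X i) P) = (d.prod fun i k => s i ^ k) * coeff d P := by
  classical
  induction P using MvPolynomial.induction_on' with
  | monomial u r =>
    have : aeval (fun i => C (s i) * X i) (monomial u r) =
        monomial u ((u.prod fun i k => s i ^ k) * r) := by
      rw [aeval_monomial, monomial_eq, map_mul, map_finsuppProd]
      simp only [mul_pow, Finsupp.prod_mul, algebraMap_eq, map_pow]
      ring
    rw [this, coeff_monomial, coeff_monomial]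
    split_ifs with h <;> simp [h]
  | add P Q hP hQ => simp only [map_add, coeff_add, hP, hQ, mul_add]

theorem eval_aeval_C_mul_X [CommSemiring R] (s v : σ → R) (P : MvPolynomial σ R) :
    eval v (aeval (fun i => C (s i) * X i) P) = eval (fun i => s i * v i) P := by
  induction P using MvPolynomial.induction_on <;> simp_all

theorem _root_.AddChar.map_weight [AddCommMonoid M] [CommMonoid R] (ψ : AddChar M R)
    (w : σ → M) (d : σ →₀ ℕ) : ψ (Finsupp.weight w d) = d.prod fun i k => ψ (w i) ^ k := by
  classical
  rw [Finsupp.weight_apply, Finsupp.sum, Finsupp.prod]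
  induction d.support using Finset.induction_on with
  | empty => simp
  | insert i s hi ih =>
    rw [Finset.sum_insert hi, Finset.prod_insert hi, ψ.map_add_eq_mul, ih, ψ.map_nsmul_eq_pow]

theorem isWeightedHomogeneous_iff_forall_aeval_C_mul_X [AddCommMonoid M] [CommSemiring R]
    [IsDomain R] {ι : Type*} (w : σ → M) (Ψ : ι → AddChar M R)
    (hΨ : Function.Injective fun m k => Ψ k m) (P : MvPolynomial σ R) (m : M) :
    IsWeightedHomogeneous w P m ↔
      ∀ k, aeval (fun i => C (Ψ k (w i)) * X i) P = C (Ψ k m) * P := by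
  simp only [MvPolynomial.ext_iff (R := R), coeff_aeval_C_mul_X, coeff_C_mul,
    ← AddChar.map_weight]
  constructor
  · intro hP k d
    by_cases hd : coeff d P = 0
    · simp [hd]
    · rw [hP hd]
  · intro h d hd
    exact hΨ (by ext k; exact mul_right_cancel₀ hd (h k d))

end MvPolynomial

section prodZPowChar

variable {K V : Type*} [Field K] [Fintype V]

noncomputable def prodZPowChar (c : V → Kˣ) : AddChar (V → ℤ) K where
  toFun m := ∏ x, (c x : K) ^ m x
  map_zero_eq_one' := by simp
  map_add_eq_mul' m m' := by
    simp only [Pi.add_apply, zpow_add₀ (Units.ne_zero _), Finset.prod_mul_distrib]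

theorem prodZPowChar_apply (c : V → Kˣ) (m : V → ℤ) :
    prodZPowChar c m = ∏ x, (c x : K) ^ m x := rfl

variable [DecidableEq V]

theorem prodZPowChar_mulSingle (x : V) (u : Kˣ) (m : V → ℤ) :
    prodZPowChar (Pi.mulSingle x u) m = (u : K) ^ m x := by
  rw [prodZPowChar_apply, Fintype.prod_eq_single x fun y hy => by simp [hy]]
  simp

theorem prodZPowChar_single (c : V → Kˣ) (x : V) (k : ℤ) :
    prodZPowChar c (Pi.single x k) = (c x : K) ^ k := by
  rw [prodZPowChar_apply, Fintype.prod_eq_single x fun y hy => by simp [hy]]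
  simp

theorem prodZPowChar_injective [CharZero K] :
    Function.Injective fun (m : V → ℤ) (c : V → Kˣ) => prodZPowChar c m := by
  intro m m' h
  funext x
  have h2 := congrFun h (Pi.mulSingle x (Units.mk0 2 two_ne_zero))
  simp only [prodZPowChar_mulSingle, Units.val_mk0] at h2
  have h2' : ((2 ^ m x : ℚ) : K) = ((2 ^ m' x : ℚ) : K) := by push_cast; exact h2
  exact zpow_right_injective₀ (by norm_num) (by norm_num) (Rat.cast_injective h2')

end prodZPowChar

namespace FinQuiver

variable (Q : FinQuiver)

def arrowWeight (a : Q.A) : Q.V → ℤ := Pi.single (Q.t a) 1 - Pi.single (Q.h a) 1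

noncomputable def evalRep : MvPolynomial Q.A ℂ →ₗ[ℂ] (Q.Rep (fun _ => 1) → ℂ) :=
  LinearMap.pi fun W => (aeval fun a => W a 0 0).toLinearMap

def scalarUnits : Q.GLb (fun _ => 1) ≃ (Q.V → ℂˣ) :=
  Equiv.piCongrRight fun _ => (Units.mapEquiv Matrix.uniqueRingEquiv.toMulEquiv).toEquiv

variable {Q}

theorem evalRep_apply (P : MvPolynomial Q.A ℂ) (W : Q.Rep (fun _ => 1)) :
    Q.evalRep P W = eval (fun a => W a 0 0) P := rfl

theorem evalRep_injective : Function.Injective Q.evalRep := fun _ _ h =>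
  MvPolynomial.funext fun v => congrFun h fun a => Matrix.of fun _ _ => v a

theorem isPolyFun_one_iff {f : Q.Rep (fun _ => 1) → ℂ} :
    Q.IsPolyFun f ↔ f ∈ LinearMap.range Q.evalRep := by
  constructor
  · rintro ⟨P, hP⟩
    refine ⟨rename Sigma.fst P, funext fun W => ?_⟩
    rw [evalRep_apply, eval_rename, hP]
    congr
    funext i
    simp only [Function.comp_apply, Fin.fin_one_eq_zero]
  · rintro ⟨P, rfl⟩
    exact ⟨rename (fun a => ⟨a, 0, 0⟩) P, fun W => by rw [evalRep_apply, eval_rename]; rfl⟩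

theorem scalarUnits_apply (g : Q.GLb (fun _ => 1)) (x : Q.V) :
    (Q.scalarUnits g x : ℂ) = (g x : Matrix (Fin 1) (Fin 1) ℂ) 0 0 := rfl

theorem scalarUnits_inv_apply (g : Q.GLb (fun _ => 1)) (x : Q.V) :
    (((Q.scalarUnits g x)⁻¹ : ℂˣ) : ℂ) = ((g x)⁻¹ : (Matrix (Fin 1) (Fin 1) ℂ)ˣ).val 0 0 := rfl

theorem prodZPowChar_arrowWeight (c : Q.V → ℂˣ) (a : Q.A) :
    prodZPowChar c (Q.arrowWeight a) = c (Q.t a) / c (Q.h a) := by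
  rw [eq_div_iff (Units.ne_zero _), ← zpow_one (c (Q.h a) : ℂ), ← prodZPowChar_single,
    ← AddChar.map_add_eq_mul, arrowWeight, sub_add_cancel, prodZPowChar_single, zpow_one]

theorem invAct_apply_zero_zero (g : Q.GLb (fun _ => 1)) (W : Q.Rep (fun _ => 1)) (a : Q.A) :
    Q.invAct g W a 0 0 = prodZPowChar (Q.scalarUnits g) (Q.arrowWeight a) * W a 0 0 := by
  rw [prodZPowChar_arrowWeight, div_eq_mul_inv, ← Units.val_inv_eq_inv_val, scalarUnits_apply,
    scalarUnits_inv_apply]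
  simp only [invAct, Matrix.mul_apply, Finset.univ_unique, Fin.default_eq_zero,
    Finset.sum_singleton]
  ring

theorem detWeight_eq_prodZPowChar (σ : Q.V → ℤ) (g : Q.GLb (fun _ => 1)) :
    Q.detWeight σ g = prodZPowChar (Q.scalarUnits g) σ := by
  simp only [detWeight, prodZPowChar_apply, Matrix.det_unique, scalarUnits_apply]
  rfl

theorem evalRep_mem_SIw_iff (σ : Q.V → ℤ) (P : MvPolynomial Q.A ℂ) :
    Q.evalRep P ∈ Q.SIw (fun _ => 1) σ ↔ IsWeightedHomogeneous Q.arrowWeight P σ := by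
  rw [isWeightedHomogeneous_iff_forall_aeval_C_mul_X _ _ prodZPowChar_injective,
    ← Q.scalarUnits.forall_congr_right]
  have hPoly : Q.IsPolyFun (Q.evalRep P) := isPolyFun_one_iff.2 ⟨P, rfl⟩
  refine (and_iff_right hPoly).trans (forall_congr' fun g => ?_)
  rw [← Q.evalRep_injective.eq_iff, funext_iff]
  refine forall_congr' fun W => ?_
  simp only [evalRep_apply, eval_aeval_C_mul_X, invAct_apply_zero_zero,
    detWeight_eq_prodZPowChar, map_mul, eval_C]

theorem SIw_one_eq_map (σ : Q.V → ℤ) :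
    Q.SIw (fun _ => 1) σ = (weightedHomogeneousSubmodule ℂ Q.arrowWeight σ).map Q.evalRep := by
  ext f
  constructor
  · intro hf
    obtain ⟨P, rfl⟩ := isPolyFun_one_iff.1 hf.1
    exact ⟨P, (evalRep_mem_SIw_iff σ P).1 hf, rfl⟩
  · rintro ⟨P, hP, rfl⟩
    exact (evalRep_mem_SIw_iff σ P).2 hP

theorem siDim_one (σ : Q.V → ℤ) :
    Q.siDim (fun _ => 1) σ =
      Nat.card {d : Q.A →₀ ℕ // Finsupp.weight Q.arrowWeight d = σ} := by
  rw [siDim, SIw_one_eq_map, ← (Submodule.equivMapOfInjective _ evalRep_injective _).finrank_eq,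
    weightedHomogeneousSubmodule_eq_finsupp_supported,
    (AddMonoidAlgebra.supportedEquivFinsupp _).finrank_eq,
    Module.finrank_eq_nat_card_basis Finsupp.basisSingleOne]
  rfl

theorem weight_arrowWeight_apply (d : Q.A →₀ ℕ) (x : Q.V) :
    Finsupp.weight Q.arrowWeight d x =
      ∑ a with Q.t a = x, (d a : ℤ) - ∑ a with Q.h a = x, (d a : ℤ) := by
  rw [Finsupp.weight_apply, Finsupp.sum_fintype _ _ (by simp), Finset.sum_apply]
  simp [arrowWeight, Pi.single_apply, Finset.sum_sub_distrib, Finset.sum_filter, mul_sub,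
    eq_comm]

end FinQuiver

section Qpmn

variable {m n p : ℕ}

theorem Qpmn_weight_arrowWeight_inl (d : (Qpmn m n p).A →₀ ℕ) (i : Fin m) :
    Finsupp.weight (Qpmn m n p).arrowWeight d (Sum.inl i) =
      ∑ j : Fin n, ∑ k : Fin p, (d (i, j, k) : ℤ) := by
  refine (FinQuiver.weight_arrowWeight_apply d _).trans ?_
  simp only [Qpmn, Finset.sum_filter, Sum.inl.injEq, reduceCtorEq, if_false,
    Finset.sum_const_zero, sub_zero]
  change ∑ a : Fin m × Fin n × Fin p, _ = _
  rw [Fintype.sum_prod_type, Finset.sum_eq_single i (fun x _ hx => by simp [hx]) (by simp)]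
  simp [Fintype.sum_prod_type]

theorem Qpmn_weight_arrowWeight_inr (d : (Qpmn m n p).A →₀ ℕ) (j : Fin n) :
    Finsupp.weight (Qpmn m n p).arrowWeight d (Sum.inr j) =
      -∑ i : Fin m, ∑ k : Fin p, (d (i, j, k) : ℤ) := by
  refine (FinQuiver.weight_arrowWeight_apply d _).trans ?_
  simp only [Qpmn, Finset.sum_filter, Sum.inr.injEq, reduceCtorEq, if_false,
    Finset.sum_const_zero, zero_sub, neg_inj]
  change ∑ a : Fin m × Fin n × Fin p, _ = _
  rw [Fintype.sum_prod_type]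
  refine Finset.sum_congr rfl fun i _ => ?_
  rw [Fintype.sum_prod_type, Finset.sum_eq_single j (fun y _ hy => by simp [hy]) (by simp)]
  simp

theorem Qpmn_weight_arrowWeight_eq_thetaAB_iff (a : Fin m → ℕ) (b : Fin n → ℕ)
    (d : (Qpmn m n p).A →₀ ℕ) :
    Finsupp.weight (Qpmn m n p).arrowWeight d = thetaAB a b ↔
      (∀ i : Fin m, ∑ j : Fin n, ∑ k : Fin p, d (i, j, k) = a i) ∧
      (∀ j : Fin n, ∑ i : Fin m, ∑ k : Fin p, d (i, j, k) = b j) := by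
  refine funext_iff.trans ?_
  change (∀ x : Fin m ⊕ Fin n, _) ↔ _
  simp only [Sum.forall, Qpmn_weight_arrowWeight_inl, Qpmn_weight_arrowWeight_inr, thetaAB,
    Sum.elim_inl, Sum.elim_inr, neg_inj]
  norm_cast

end Qpmn

theorem numTables_eq_siDim_Qpmn_general
    (m n p : ℕ)
    (a : Fin m → ℕ) (b : Fin n → ℕ) :
    numTables m n p a b = (Qpmn m n p).siDim (fun _ => 1) (thetaAB a b) := by
  refine (Nat.card_congr ?_).trans (FinQuiver.siDim_one _).symm
  exact (Finsupp.equivFunOnFinite.subtypeEquiv fun d =>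
    Qpmn_weight_arrowWeight_eq_thetaAB_iff a b d).symm

/-- The number of `m × n × p` contingency tables with plane-sum margins
`a` and `b` equals the dimension of `SI(Q^p_{m,n}, 𝟏)_{θ_{a,b}}`. -/
theorem numTables_eq_siDim_Qpmn
    (m n p : ℕ) (hm : 0 < m) (hn : 0 < n) (hp : 0 < p)
    (a : Fin m → ℕ) (b : Fin n → ℕ)
    (hab : ∑ i : Fin m, a i = ∑ j : Fin n, b j) :
    numTables m n p a b = (Qpmn m n p).siDim (fun _ => 1) (thetaAB a b) :=
  numTables_eq_siDim_Qpmn_general m n p a b
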